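/- Let k be a field and H a k-vector space carrying a unital associative algebra structure (μ, 1) and a counital coassociative coalgebra structure (Δ, ε) with ε(1) = 1. Write Δ(h) = Σ h_{(1)} ⊗ h_{(2)} and let H* be the dual space. Define the linear maps σ'_Ass : H ⊗ H → H ⊗ H, a ⊗ b ↦ ab ⊗ 1, and σ_bi : H ⊗ H* → H* ⊗ H, h ⊗ l ↦ Σ (x ↦ l(x·h_{(2)})) ⊗ h_{(1)}. Then the following are equivalent: (1) the colored Yang–Baxter equation (σ_bi ⊗ id_H)∘(id_H ⊗ σ_bi)∘(σ'_Ass ⊗ id_{H*}) = (id_{H*} ⊗ σ'_Ass)∘(σ_bi ⊗ id_H)∘(id_H ⊗ σ_bi) holds on H ⊗ H ⊗ H*, and σ_bi(1 ⊗ l) = l ⊗ 1 and σ_bi(h ⊗ ε) = ε ⊗ h for all h ∈ H, l ∈ H*; (2) (H, μ, 1, Δ, ε) is a bialgebra, i.e. Δ(ab) = Δ(a)Δ(b), Δ(1) = 1 ⊗ 1, and ε(ab) = ε(a)ε(b) for all a, b ∈ H. -/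

import Mathlib

open TensorProduct

variable (k : Type*) [Field k]

/-- The colored Yang–Baxter equation on `X ⊗ Y ⊗ Z`. -/
def ColoredYBE (X Y Z : Type*) [AddCommGroup X] [Module k X] [AddCommGroup Y] [Module k Y]
    [AddCommGroup Z] [Module k Z]
    (cXY : X ⊗[k] Y →ₗ[k] Y ⊗[k] X) (cXZ : X ⊗[k] Z →ₗ[k] Z ⊗[k] X)
    (cYZ : Y ⊗[k] Z →ₗ[k] Z ⊗[k] Y) : Prop :=
  (TensorProduct.assoc k Z Y X).toLinearMap
      ∘ₗ (cYZ.rTensor X)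
      ∘ₗ (TensorProduct.assoc k Y Z X).symm.toLinearMap
      ∘ₗ (cXZ.lTensor Y)
      ∘ₗ (TensorProduct.assoc k Y X Z).toLinearMap
      ∘ₗ (cXY.rTensor Z)
      ∘ₗ (TensorProduct.assoc k X Y Z).symm.toLinearMap
    = (cXY.lTensor Z)
      ∘ₗ (TensorProduct.assoc k Z X Y).toLinearMap
      ∘ₗ (cXZ.rTensor Y)
      ∘ₗ (TensorProduct.assoc k X Z Y).symm.toLinearMap
      ∘ₗ (cYZ.lTensor X)

variable (H : Type*) [Ring H] [Algebra k H]

/-- The bilinear contraction `H ⊗ H* → H*`, `h ⊗ l ↦ (x ↦ l (x * h))`. -/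
noncomputable def rightMulDual : H ⊗[k] Module.Dual k H →ₗ[k] Module.Dual k H :=
  TensorProduct.lift
    ((LinearMap.llcomp k H H k).flip ∘ₗ (LinearMap.mul k H).flip)

section

variable [Coalgebra k H]

/-- The braiding `σ_bi : H ⊗ H* → H* ⊗ H`,
`h ⊗ l ↦ Σ (x ↦ l (x · h₍₂₎)) ⊗ h₍₁₎` (Sweedler notation). -/
noncomputable def sigmaBi : H ⊗[k] Module.Dual k H →ₗ[k] Module.Dual k H ⊗[k] H :=
  (TensorProduct.comm k H (Module.Dual k H)).toLinearMap
    ∘ₗ (LinearMap.lTensor H (rightMulDual k H))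
    ∘ₗ (TensorProduct.assoc k H H (Module.Dual k H)).toLinearMap
    ∘ₗ ((Coalgebra.comul (R := k) (A := H)).rTensor (Module.Dual k H))

/-- The right associativity braiding `σ'_Ass : H ⊗ H → H ⊗ H`, `a ⊗ b ↦ ab ⊗ 1`. -/
noncomputable def sigmaAssR : H ⊗[k] H →ₗ[k] H ⊗[k] H :=
  ((TensorProduct.mk k H H).flip 1) ∘ₗ (LinearMap.mul' k H)

end

/-!
Write `σ_bi (h ⊗ l) = σ (Δ h ⊗ l)`, where `σ (t ⊗ l) = Σ (x ↦ l (x t₂)) ⊗ t₁` makes sense for every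
`t ∈ H ⊗ H`. Evaluating the `H*`-factor of `σ (t ⊗ l)` at `1` gives `(id ⊗ l) t`, so the family
`σ (t ⊗ ·)` determines `t`.

Given `σ_bi (1 ⊗ l) = l ⊗ 1`, both sides of the Yang–Baxter equation at `a ⊗ b ⊗ l` have the form
`w ⊗ 1`: on the left `w = σ (Δ(ab) ⊗ l)`, on the right `w = σ (Δa Δb ⊗ l)`, because
`l · v = (x ↦ l (x v))` is a right action of `H` on `H*`. Since `ε 1 = 1`, `w ⊗ 1` determines `w`,
so the equation says `Δ(ab) = Δa Δb`. Likewise `σ_bi (1 ⊗ l) = l ⊗ 1` says `Δ 1 = 1 ⊗ 1`, and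
contracting `σ_bi (h ⊗ ε) = ε ⊗ h` with `ε` gives `ε (x h) = ε x ε h`.
-/

theorem TensorProduct.eq_of_forall_rid_lTensor_dual_eq {R M N : Type*} [CommSemiring R]
    [AddCommMonoid M] [Module R M] [AddCommMonoid N] [Module R N] [Module.Free R N]
    {t t' : M ⊗[R] N}
    (h : ∀ l : Module.Dual R N,
      TensorProduct.rid R M (l.lTensor M t) = TensorProduct.rid R M (l.lTensor M t')) :
    t = t' := by
  classical
  let b := Module.Free.chooseBasis R N
  have coord (i) : Finsupp.lapply i ∘ₗ (equivFinsuppOfBasisRight b).toLinearMap =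
      (TensorProduct.rid R M).toLinearMap ∘ₗ (b.coord i).lTensor M := by
    ext m n
    simp
  refine (equivFinsuppOfBasisRight b).injective (Finsupp.ext fun i => ?_)
  exact congr($(coord i) t).trans ((h _).trans congr($(coord i) t').symm)

theorem TensorProduct.assoc_tmul_eq_lTensor_flip_mk {R M N P : Type*} [CommSemiring R]
    [AddCommMonoid M] [Module R M] [AddCommMonoid N] [Module R N] [AddCommMonoid P] [Module R P]
    (w : M ⊗[R] N) (p : P) :
    TensorProduct.assoc R M N P (w ⊗ₜ p) = ((TensorProduct.mk R N P).flip p).lTensor M w := by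
  induction w using TensorProduct.induction_on with
  | zero => simp
  | tmul m n => simp
  | add w w' hw hw' => simp only [add_tmul, map_add, hw, hw']

theorem TensorProduct.ext_threefold'_iff {R M N P Q : Type*} [CommSemiring R]
    [AddCommMonoid M] [Module R M] [AddCommMonoid N] [Module R N] [AddCommMonoid P] [Module R P]
    [AddCommMonoid Q] [Module R Q] {g h : M ⊗[R] (N ⊗[R] P) →ₗ[R] Q} :
    g = h ↔ ∀ x y z, g (x ⊗ₜ (y ⊗ₜ z)) = h (x ⊗ₜ (y ⊗ₜ z)) :=
  ⟨fun hgh _ _ _ => hgh ▸ rfl, TensorProduct.ext_threefold'⟩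

noncomputable def sigmaTensor :
    (H ⊗[k] H) ⊗[k] Module.Dual k H →ₗ[k] Module.Dual k H ⊗[k] H :=
  (TensorProduct.comm k H (Module.Dual k H)).toLinearMap
    ∘ₗ (LinearMap.lTensor H (rightMulDual k H))
    ∘ₗ (TensorProduct.assoc k H H (Module.Dual k H)).toLinearMap

section

variable {k H}

@[simp]
theorem rightMulDual_tmul_apply (v : H) (l : Module.Dual k H) (x : H) :
    rightMulDual k H (v ⊗ₜ l) x = l (x * v) := by
  simp [rightMulDual]

@[simp]
theorem rightMulDual_one_tmul (l : Module.Dual k H) : rightMulDual k H (1 ⊗ₜ l) = l := by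
  ext x
  simp

theorem rightMulDual_tmul_rightMulDual (u v : H) (l : Module.Dual k H) :
    rightMulDual k H (u ⊗ₜ rightMulDual k H (v ⊗ₜ l)) =
      rightMulDual k H ((u * v) ⊗ₜ l) := by
  ext x
  simp [mul_assoc]

@[simp]
theorem sigmaTensor_tmul_tmul (u v : H) (l : Module.Dual k H) :
    sigmaTensor k H ((u ⊗ₜ v) ⊗ₜ l) = rightMulDual k H (v ⊗ₜ l) ⊗ₜ u := by
  simp [sigmaTensor]

theorem lid_rTensor_eval_one_sigmaTensor (t : H ⊗[k] H) (l : Module.Dual k H) :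
    TensorProduct.lid k H ((LinearMap.applyₗ (1 : H)).rTensor H (sigmaTensor k H (t ⊗ₜ l))) =
      TensorProduct.rid k H (l.lTensor H t) := by
  induction t using TensorProduct.induction_on with
  | zero => simp
  | tmul u v => simp
  | add s s' hs hs' => simp only [add_tmul, map_add, hs, hs']

theorem eq_of_forall_sigmaTensor_eq {t t' : H ⊗[k] H}
    (h : ∀ l : Module.Dual k H, sigmaTensor k H (t ⊗ₜ l) = sigmaTensor k H (t' ⊗ₜ l)) :
    t = t' :=
  TensorProduct.eq_of_forall_rid_lTensor_dual_eq fun l => by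
    rw [← lid_rTensor_eval_one_sigmaTensor, ← lid_rTensor_eval_one_sigmaTensor, h]

variable [Coalgebra k H]

local notation "ε" => Coalgebra.counit (R := k) (A := H)
local notation "Δ" => Coalgebra.comul (R := k) (A := H)

theorem sigmaBi_tmul (h : H) (l : Module.Dual k H) :
    sigmaBi k H (h ⊗ₜ l) = sigmaTensor k H (Δ h ⊗ₜ l) :=
  rfl

theorem rid_lTensor_counit_sigmaTensor (t : H ⊗[k] H) (l : Module.Dual k H) :
    TensorProduct.rid k _ (LinearMap.lTensor _ ε (sigmaTensor k H (t ⊗ₜ l))) =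
      rightMulDual k H (TensorProduct.lid k H (LinearMap.rTensor H ε t) ⊗ₜ l) := by
  induction t using TensorProduct.induction_on with
  | zero => simp
  | tmul u v => ext x; simp
  | add s s' hs hs' => simp only [add_tmul, map_add, hs, hs']

theorem rid_lTensor_counit_sigmaBi (h : H) (l : Module.Dual k H) :
    TensorProduct.rid k _ (LinearMap.lTensor _ ε (sigmaBi k H (h ⊗ₜ l))) =
      rightMulDual k H (h ⊗ₜ l) := by
  rw [sigmaBi_tmul, rid_lTensor_counit_sigmaTensor, Coalgebra.rTensor_counit_comul,
    TensorProduct.lid_tmul, one_smul]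

theorem sigmaTensor_tmul_counit (hε : ∀ a b : H, ε (a * b) = ε a * ε b) (t : H ⊗[k] H) :
    sigmaTensor k H (t ⊗ₜ ε) = ε ⊗ₜ TensorProduct.rid k H (LinearMap.lTensor H ε t) := by
  induction t using TensorProduct.induction_on with
  | zero => simp
  | tmul u v =>
    have : rightMulDual k H (v ⊗ₜ ε) = ε v • ε := by
      ext x
      simp [hε, mul_comm]
    simp [this, smul_tmul]
  | add s s' hs hs' => simp only [add_tmul, tmul_add, map_add, hs, hs']

theorem sigmaBi_one_tmul_iff :
    (∀ l : Module.Dual k H, sigmaBi k H (1 ⊗ₜ l) = l ⊗ₜ 1) ↔ Δ (1 : H) = 1 := by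
  have sigmaTensor_one (l : Module.Dual k H) : sigmaTensor k H (1 ⊗ₜ l) = l ⊗ₜ 1 := by
    simp [Algebra.TensorProduct.one_def]
  simp only [sigmaBi_tmul, ← sigmaTensor_one]
  exact ⟨eq_of_forall_sigmaTensor_eq, fun h l => by rw [h]⟩

theorem sigmaBi_tmul_counit_iff :
    (∀ h : H, sigmaBi k H (h ⊗ₜ ε) = ε ⊗ₜ h) ↔ ∀ a b : H, ε (a * b) = ε a * ε b := by
  refine ⟨fun h a b => ?_, fun hε h => ?_⟩
  · have := congr(TensorProduct.rid k _ (LinearMap.lTensor _ ε $(h b)) a)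
    simpa [rid_lTensor_counit_sigmaBi, mul_comm] using this
  · rw [sigmaBi_tmul, sigmaTensor_tmul_counit hε, Coalgebra.lTensor_counit_comul,
      TensorProduct.rid_tmul, one_smul]

theorem sigmaBi_tmul_sigmaTensor (a : H) (t : H ⊗[k] H) (l : Module.Dual k H) :
    LinearMap.lTensor _ (LinearMap.mul' k H) (TensorProduct.assoc k _ H H
      ((sigmaBi k H).rTensor H
        ((TensorProduct.assoc k H _ H).symm (a ⊗ₜ sigmaTensor k H (t ⊗ₜ l))))) =
      sigmaTensor k H ((Δ a * t) ⊗ₜ l) := by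
  induction t using TensorProduct.induction_on with
  | zero => simp
  | add s s' hs hs' => simp only [mul_add, add_tmul, tmul_add, map_add, hs, hs']
  | tmul u v =>
    rw [sigmaTensor_tmul_tmul, TensorProduct.assoc_symm_tmul, LinearMap.rTensor_tmul,
      sigmaBi_tmul]
    induction Δ a using TensorProduct.induction_on with
    | zero => simp
    | add s s' hs hs' => simp only [add_mul, add_tmul, map_add, hs, hs']
    | tmul p q => simp [rightMulDual_tmul_rightMulDual]

theorem coloredYBE_sigmaAssR_sigmaBi_iff
    (hone : ∀ l : Module.Dual k H, sigmaBi k H (1 ⊗ₜ l) = l ⊗ₜ 1) :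
    ColoredYBE k H H (Module.Dual k H) (sigmaAssR k H) (sigmaBi k H) (sigmaBi k H) ↔
      ∀ (a b : H) (l : Module.Dual k H),
        ((TensorProduct.mk k H H).flip 1).lTensor _ (sigmaTensor k H (Δ (a * b) ⊗ₜ l)) =
          ((TensorProduct.mk k H H).flip 1).lTensor _ (sigmaTensor k H ((Δ a * Δ b) ⊗ₜ l)) := by
  rw [ColoredYBE, TensorProduct.ext_threefold'_iff]
  simp only [LinearMap.comp_apply, LinearEquiv.coe_coe, TensorProduct.assoc_symm_tmul,
    LinearMap.rTensor_tmul, LinearMap.lTensor_tmul, sigmaAssR, LinearMap.lTensor_comp,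
    LinearMap.mul'_apply, LinearMap.flip_apply, TensorProduct.mk_apply, hone,
    TensorProduct.assoc_tmul_eq_lTensor_flip_mk, sigmaBi_tmul, sigmaBi_tmul_sigmaTensor]

theorem coloredYBE_sigmaAssR_sigmaBi_iff_comul_mul
    (hε1 : ε (1 : H) = 1) (hΔ1 : Δ (1 : H) = 1) :
    ColoredYBE k H H (Module.Dual k H) (sigmaAssR k H) (sigmaBi k H) (sigmaBi k H) ↔
      ∀ a b : H, Δ (a * b) = Δ a * Δ b := by
  have tmul_one_injective :
      Function.Injective (((TensorProduct.mk k H H).flip 1).lTensor (Module.Dual k H)) := by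
    let r : H ⊗[k] H →ₗ[k] H := (TensorProduct.rid k H).toLinearMap ∘ₗ LinearMap.lTensor H ε
    have retraction : r ∘ₗ (TensorProduct.mk k H H).flip 1 = LinearMap.id := by
      ext u
      simp [r, hε1]
    refine LinearMap.injective_of_comp_eq_id _ (r.lTensor _) ?_
    rw [← LinearMap.lTensor_comp, retraction, LinearMap.lTensor_id]
  rw [coloredYBE_sigmaAssR_sigmaBi_iff (sigmaBi_one_tmul_iff.2 hΔ1)]
  simp only [tmul_one_injective.eq_iff]
  exact ⟨fun h a b => eq_of_forall_sigmaTensor_eq (h a b), fun h a b l => by rw [h]⟩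

end

variable [Coalgebra k H]

/-- For an algebra-and-coalgebra `H` with `ε(1) = 1`, the colored Yang–Baxter equation on
`H ⊗ H ⊗ H*` for `(σ'_Ass, σ_bi, σ_bi)` together with the unit naturality of `σ_bi` is
equivalent to the bialgebra compatibility conditions. -/
theorem ybe_sigma_bi_iff_bialgebra
    (hcounit_one : Coalgebra.counit (R := k) (A := H) 1 = 1) :
    (ColoredYBE k H H (Module.Dual k H)
        (sigmaAssR k H) (sigmaBi k H) (sigmaBi k H)
      ∧ (∀ l : Module.Dual k H, sigmaBi k H ((1 : H) ⊗ₜ[k] l) = l ⊗ₜ[k] (1 : H))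
      ∧ (∀ h : H, sigmaBi k H (h ⊗ₜ[k] (Coalgebra.counit (R := k) (A := H)))
          = (Coalgebra.counit (R := k) (A := H)) ⊗ₜ[k] h))
    ↔ ((∀ a b : H, Coalgebra.comul (R := k) (a * b)
          = Coalgebra.comul (R := k) a * Coalgebra.comul (R := k) b)
      ∧ Coalgebra.comul (R := k) (1 : H) = 1
      ∧ (∀ a b : H, Coalgebra.counit (R := k) (A := H) (a * b)
          = Coalgebra.counit (R := k) (A := H) a * Coalgebra.counit (R := k) (A := H) b)) := by
  rw [sigmaBi_one_tmul_iff, sigmaBi_tmul_counit_iff]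
  constructor
  · rintro ⟨hybe, hcomul_one, hcounit_mul⟩
    exact ⟨(coloredYBE_sigmaAssR_sigmaBi_iff_comul_mul hcounit_one hcomul_one).1 hybe,
      hcomul_one, hcounit_mul⟩
  · rintro ⟨hcomul_mul, hcomul_one, hcounit_mul⟩
    exact ⟨(coloredYBE_sigmaAssR_sigmaBi_iff_comul_mul hcounit_one hcomul_one).2 hcomul_mul,
      hcomul_one, hcounit_mul⟩
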